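/- arXiv:math/0604221 — 2 statements merged into one kernel-verified Lean document; each statement's English description precedes it below -/
import Mathlib

section
/- For every real number t with t > 0 and t ≠ 1 and all nonzero rational numbers α₁, α₂ with α₁ + α₂ = 0, one has t(t−1) + Σ_{i=1,2} (t−1)/(t^{αᵢ}−1) · (t − 2 + 2(1 + t^{(αᵢ+1)/2})) = 0. -/
/-- For every real `t > 0` with `t ≠ 1` and all nonzero rationals `α₁`, `α₂`
with `α₁ + α₂ = 0`,
`t(t−1) + Σ_{i=1,2} (t−1)/(t^{αᵢ}−1)·(t − 2 + 2(1 + t^{(αᵢ+1)/2})) = 0`.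
Here `t^q` is `Real.rpow t (q : ℝ)`. -/
theorem stmt6 (t : ℝ) (ht : 0 < t) (ht1 : t ≠ 1) (α₁ α₂ : ℚ) (h₁ : α₁ ≠ 0) (h₂ : α₂ ≠ 0)
    (hsum : α₁ + α₂ = 0) :
    t * (t - 1)
      + (t - 1) / (t ^ (α₁ : ℝ) - 1) * (t - 2 + 2 * (1 + t ^ (((α₁ + 1) / 2 : ℚ) : ℝ)))
      + (t - 1) / (t ^ (α₂ : ℝ) - 1) * (t - 2 + 2 * (1 + t ^ (((α₂ + 1) / 2 : ℚ) : ℝ))) = 0 := by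
  have hα : (α₁ : ℝ) ≠ 0 := by exact_mod_cast h₁
  set a : ℝ := t ^ (α₁ : ℝ) with ha_def
  set s : ℝ := t ^ (((α₁ + 1) / 2 : ℚ) : ℝ) with hs_def
  have ha : 0 < a := Real.rpow_pos_of_pos ht _
  have hs : 0 < s := Real.rpow_pos_of_pos ht _
  have ha1 : a ≠ 1 := by
    rw [ha_def, Real.rpow_def_of_pos ht, Ne, Real.exp_eq_one_iff, mul_eq_zero]
    push_neg
    exact ⟨Real.log_ne_zero_of_pos_of_ne_one ht ht1, hα⟩
  have hα2 : (α₂ : ℝ) = -(α₁ : ℝ) := by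
    have : (α₁ : ℝ) + (α₂ : ℝ) = 0 := by exact_mod_cast congrArg (Rat.cast : ℚ → ℝ) hsum
    linarith
  have h2 : t ^ (α₂ : ℝ) = a⁻¹ := by
    rw [hα2, Real.rpow_neg ht.le, ha_def]
  have hainv1 : a⁻¹ ≠ 1 := fun h => ha1 (by rw [← inv_inv a, h, inv_one])
  have hinv1 : a⁻¹ - 1 ≠ 0 := sub_ne_zero.mpr hainv1
  have ha1' : a - 1 ≠ 0 := sub_ne_zero.mpr ha1
  have hst : t ^ (((α₂ + 1) / 2 : ℚ) : ℝ) = t / s := by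
    have hexp : (((α₂ + 1) / 2 : ℚ) : ℝ) = 1 - (((α₁ + 1) / 2 : ℚ) : ℝ) := by
      push_cast
      have : (α₁ : ℝ) + (α₂ : ℝ) = 0 := by exact_mod_cast congrArg (Rat.cast : ℚ → ℝ) hsum
      linarith
    rw [hexp, Real.rpow_sub ht, Real.rpow_one, hs_def]
  have hss : s * s = a * t := by
    have h1 : a * t = t ^ ((α₁ : ℝ) + 1) := by rw [Real.rpow_add ht, Real.rpow_one]
    rw [h1, hs_def, ← Real.rpow_add ht]
    congr 1
    push_cast
    ring
  rw [h2, hst]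
  have hinv : a⁻¹ - 1 = (1 - a) / a := by field_simp
  rw [hinv]
  have h1a : 1 - a ≠ 0 := fun h => ha1 (by linarith)
  field_simp
  linear_combination (2 * (t - 1) * (1 - a)) * hss
end

section
/- For every rational number α with α ∉ {−1, 0, 1}, the function t ↦ (t−1)²/((t^α−1)·(t^{−α}−1)) + t tends to 1 − 1/α² as t tends to 1 from the right (along nhdsWithin 1 (Set.Ioi 1)), and 1 − 1/α² ≠ 0. -/
open Filter

lemma slope_rpow_tendsto (a : ℝ) :
    Tendsto (fun t : ℝ => (t ^ a - 1) / (t - 1)) (nhdsWithin 1 (Set.Ioi 1)) (nhds a) := by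
  have h : HasDerivAt (fun x : ℝ => x ^ a) (a * (1 : ℝ) ^ (a - 1)) 1 :=
    Real.hasDerivAt_rpow_const (Or.inl one_ne_zero)
  have h2 := hasDerivAt_iff_tendsto_slope.mp h
  rw [Real.one_rpow, mul_one] at h2
  have h3 : Tendsto (slope (fun x : ℝ => x ^ a) 1) (nhdsWithin 1 (Set.Ioi 1)) (nhds a) :=
    h2.mono_left (nhdsWithin_mono _ (fun x hx => ne_of_gt hx))
  refine h3.congr (fun t => ?_)
  simp [slope_def_field, Real.one_rpow]

theorem stmt11 (α : ℚ) (hα : α ∉ ({-1, 0, 1} : Set ℚ)) :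
    Filter.Tendsto
        (fun t : ℝ => (t - 1) ^ 2 / ((t ^ (α : ℝ) - 1) * (t ^ ((-α : ℚ) : ℝ) - 1)) + t)
        (nhdsWithin 1 (Set.Ioi 1)) (nhds (1 - 1 / (α : ℝ) ^ 2)) ∧
      (1 : ℝ) - 1 / (α : ℝ) ^ 2 ≠ 0 := by
  simp only [Set.mem_insert_iff, Set.mem_singleton_iff, not_or] at hα
  obtain ⟨h1, h0, h2⟩ := hα
  set a : ℝ := (α : ℝ) with ha
  have ha0 : a ≠ 0 := by rw [ha]; exact_mod_cast h0
  have ha1 : a ≠ 1 := by rw [ha]; exact_mod_cast h2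
  have han1 : a ≠ -1 := by
    rw [ha]; intro h; exact h1 (by exact_mod_cast h)
  constructor
  · have hcast : ((-α : ℚ) : ℝ) = -a := by push_cast [ha]; ring
    rw [hcast]
    have hp := slope_rpow_tendsto a
    have hn := slope_rpow_tendsto (-a)
    have hprod := hp.mul hn
    have hne : a * (-a) ≠ 0 := by
      simp [ha0]
    have hinv := hprod.inv₀ hne
    have hid : Tendsto (fun t : ℝ => t) (nhdsWithin 1 (Set.Ioi 1)) (nhds 1) :=
      tendsto_id.mono_left nhdsWithin_le_nhds
    have := hinv.add hid
    have heq : ∀ t : ℝ,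
        ((t ^ a - 1) / (t - 1) * ((t ^ (-a) - 1) / (t - 1)))⁻¹ + t
          = (t - 1) ^ 2 / ((t ^ a - 1) * (t ^ (-a) - 1)) + t := by
      intro t
      rw [div_mul_div_comm, inv_div]
      ring_nf
    have hval : (a * -a)⁻¹ + 1 = 1 - 1 / a ^ 2 := by
      field_simp
      ring
    rw [hval] at this
    exact this.congr (fun t => heq t)
  · intro h
    have : a ^ 2 = 1 := by
      field_simp at h
      linarith [h]
    have hfac : (a - 1) * (a + 1) = 0 := by nlinarith
    rcases mul_eq_zero.mp hfac with h' | h'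
    · exact ha1 (by linarith)
    · exact han1 (by linarith)
end
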